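/- Let W and T be real n×n matrices with W symmetric positive definite and T symmetric positive semidefinite, let α, β > 0, and set S = W^{-1/2} T W^{-1/2}. Then the TTSCSP iteration matrix satisfies the similarity identity G_{α,β} = W^{-1/2} · (I + βS)^{-1}(S - βI)(αI + S)^{-1}(I - αS) · W^{1/2}; in particular G_{α,β} and Ĝ_{α,β} = (I + βS)^{-1}(S - βI)(αI + S)^{-1}(I - αS) have the same eigenvalues. -/

import Mathlib

open Matrix

open scoped ComplexOrder in
/-- The positive semidefinite square root of a positive semidefinite matrix (the definition
`Matrix.PosSemidef.sqrt` of Mathlib, December 2024, since removed from Mathlib). -/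
noncomputable def Matrix.PosSemidef.sqrt {n 𝕜 : Type*} [Fintype n] [DecidableEq n] [RCLike 𝕜]
    {A : Matrix n n 𝕜} (hA : A.PosSemidef) : Matrix n n 𝕜 :=
  (hA.1.eigenvectorUnitary : Matrix n n 𝕜) * diagonal (((↑) : ℝ → 𝕜) ∘ (√·) ∘ hA.1.eigenvalues) *
    ((star hA.1.eigenvectorUnitary : unitaryGroup n 𝕜) : Matrix n n 𝕜)

/-! `W^{1/2}` is a unit `R` with `R * R = W`, and `T = R * S * R`. Each factor of `G_{α,β}` is
therefore `R * X * R` for the corresponding factor `X` of `Ĝ_{α,β}`; inverting such a factor turns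
it into `R⁻¹ * X⁻¹ * R⁻¹`, so all inner copies of `R` cancel and `G_{α,β} = R⁻¹ Ĝ_{α,β} R`.
Similar matrices have the same spectrum. -/

open scoped ComplexOrder in
theorem Matrix.PosSemidef.sqrt_mul_self {n 𝕜 : Type*} [Fintype n] [DecidableEq n] [RCLike 𝕜]
    {A : Matrix n n 𝕜} (hA : A.PosSemidef) : hA.sqrt * hA.sqrt = A := by
  have hdiag : diagonal (((↑) : ℝ → 𝕜) ∘ (√·) ∘ hA.1.eigenvalues) *
      diagonal (((↑) : ℝ → 𝕜) ∘ (√·) ∘ hA.1.eigenvalues) =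
      diagonal (RCLike.ofReal ∘ hA.1.eigenvalues) := by
    rw [diagonal_mul_diagonal]
    congr 1
    funext i
    simp [← RCLike.ofReal_mul, Real.mul_self_sqrt (hA.eigenvalues_nonneg i)]
  conv_rhs => rw [hA.1.spectral_theorem, Unitary.conjStarAlgAut_apply, ← hdiag]
  simp only [Matrix.PosSemidef.sqrt, mul_assoc]
  rw [Unitary.coe_star, ← mul_assoc (star _), Unitary.coe_star_mul_self, one_mul]

open scoped ComplexOrder in
theorem Matrix.PosDef.isUnit_sqrt {n 𝕜 : Type*} [Fintype n] [DecidableEq n] [RCLike 𝕜]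
    {A : Matrix n n 𝕜} (hA : A.PosDef) : IsUnit hA.posSemidef.sqrt :=
  isUnit_mul_self_iff.mp (by rw [hA.posSemidef.sqrt_mul_self]; exact hA.isUnit)

theorem Matrix.sandwich_inv_mul_mul_inv_mul {n α : Type*} [Fintype n]
    [DecidableEq n] [CommRing α] {P : Matrix n n α} (hP : IsUnit P) (A B C D : Matrix n n α) :
    (P * A * P)⁻¹ * (P * B * P) * (P * C * P)⁻¹ * (P * D * P) =
      P⁻¹ * (A⁻¹ * B * C⁻¹ * D) * P := by
  have hP' : IsUnit P.det := (isUnit_iff_isUnit_det P).mp hP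
  simp only [Matrix.mul_inv_rev, mul_assoc, nonsing_inv_mul_cancel_left _ _ hP',
    mul_nonsing_inv_cancel_left _ _ hP']

theorem spectrum_map_nonsing_inv_mul_mul {n R S : Type*} [Fintype n] [DecidableEq n] [CommRing R]
    [CommRing S] (f : R →+* S) {P : Matrix n n R} (hP : IsUnit P) (A : Matrix n n R) :
    spectrum S ((P⁻¹ * A * P).map f) = spectrum S (A.map f) := by
  let u : (Matrix n n S)ˣ := Units.map (f.mapMatrix (m := n) : Matrix n n R →* Matrix n n S) hP.unit
  have hconj : (P⁻¹ * A * P).map f = (↑u⁻¹ : Matrix n n S) * A.map f * (↑u : Matrix n n S) := by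
    simp [u, coe_units_inv]
  rw [hconj, spectrum.units_conjugate']

theorem ttscsp_similarity_general
    {n : ℕ}
    (W T : Matrix (Fin n) (Fin n) ℝ)
    (hW : W.PosDef)
    (α β : ℝ)
    (S : Matrix (Fin n) (Fin n) ℝ)
    (hSdef : S = (hW.posSemidef.sqrt)⁻¹ * T * (hW.posSemidef.sqrt)⁻¹) :
    (W + β • T)⁻¹ * (T - β • W) * (α • W + T)⁻¹ * (W - α • T) =
      (hW.posSemidef.sqrt)⁻¹ *
        ((1 + β • S)⁻¹ * (S - β • (1 : Matrix (Fin n) (Fin n) ℝ)) *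
          (α • (1 : Matrix (Fin n) (Fin n) ℝ) + S)⁻¹ * (1 - α • S)) *
        hW.posSemidef.sqrt ∧
    spectrum ℂ
        (((W + β • T)⁻¹ * (T - β • W) * (α • W + T)⁻¹ * (W - α • T)).map Complex.ofReal) =
      spectrum ℂ
        (((1 + β • S)⁻¹ * (S - β • (1 : Matrix (Fin n) (Fin n) ℝ)) *
          (α • (1 : Matrix (Fin n) (Fin n) ℝ) + S)⁻¹ * (1 - α • S)).map Complex.ofReal) := by
  set R := hW.posSemidef.sqrt
  have hR : IsUnit R := hW.isUnit_sqrt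
  have hRdet : IsUnit R.det := (isUnit_iff_isUnit_det R).mp hR
  have hRR : R * R = W := hW.posSemidef.sqrt_mul_self
  have hRSR : R * S * R = T := by
    simp only [hSdef, mul_assoc, nonsing_inv_mul _ hRdet, mul_one,
      mul_nonsing_inv_cancel_left _ _ hRdet]
  obtain ⟨e₁, e₂, e₃, e₄⟩ : W + β • T = R * (1 + β • S) * R ∧
      T - β • W = R * (S - β • (1 : Matrix (Fin n) (Fin n) ℝ)) * R ∧
      α • W + T = R * (α • (1 : Matrix (Fin n) (Fin n) ℝ) + S) * R ∧
      W - α • T = R * (1 - α • S) * R := by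
    refine ⟨?_, ?_, ?_, ?_⟩ <;>
      simp only [mul_add, add_mul, mul_sub, sub_mul, mul_smul_comm, smul_mul_assoc, mul_one, hRR,
        hRSR]
  have hG : (W + β • T)⁻¹ * (T - β • W) * (α • W + T)⁻¹ * (W - α • T) =
      R⁻¹ * ((1 + β • S)⁻¹ * (S - β • (1 : Matrix (Fin n) (Fin n) ℝ)) *
        (α • (1 : Matrix (Fin n) (Fin n) ℝ) + S)⁻¹ * (1 - α • S)) * R := by
    rw [e₁, e₂, e₃, e₄, sandwich_inv_mul_mul_inv_mul hR]
  exact ⟨hG, hG ▸ spectrum_map_nonsing_inv_mul_mul Complex.ofRealHom hR _⟩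

/-- **Similarity of `G_{α,β}` and `Ĝ_{α,β}`.** With `S = W^{-1/2} T W^{-1/2}`, the TTSCSP
iteration matrix satisfies
`G_{α,β} = W^{-1/2} (I + βS)⁻¹ (S - βI) (αI + S)⁻¹ (I - αS) W^{1/2}`;
in particular `G_{α,β}` and `Ĝ_{α,β} = (I + βS)⁻¹ (S - βI) (αI + S)⁻¹ (I - αS)` have the
same eigenvalues. -/
theorem ttscsp_similarity
    {n : ℕ}
    (W T : Matrix (Fin n) (Fin n) ℝ)
    (hW : W.PosDef) (hT : T.PosSemidef)
    (α β : ℝ) (hα : 0 < α) (hβ : 0 < β)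
    (S : Matrix (Fin n) (Fin n) ℝ)
    (hSdef : S = (hW.posSemidef.sqrt)⁻¹ * T * (hW.posSemidef.sqrt)⁻¹) :
    (W + β • T)⁻¹ * (T - β • W) * (α • W + T)⁻¹ * (W - α • T) =
      (hW.posSemidef.sqrt)⁻¹ *
        ((1 + β • S)⁻¹ * (S - β • (1 : Matrix (Fin n) (Fin n) ℝ)) *
          (α • (1 : Matrix (Fin n) (Fin n) ℝ) + S)⁻¹ * (1 - α • S)) *
        hW.posSemidef.sqrt ∧
    spectrum ℂ
        (((W + β • T)⁻¹ * (T - β • W) * (α • W + T)⁻¹ * (W - α • T)).map Complex.ofReal) =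
      spectrum ℂ
        (((1 + β • S)⁻¹ * (S - β • (1 : Matrix (Fin n) (Fin n) ℝ)) *
          (α • (1 : Matrix (Fin n) (Fin n) ℝ) + S)⁻¹ * (1 - α • S)).map Complex.ofReal) :=
  ttscsp_similarity_general W T hW α β S hSdef
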